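/- arXiv:1509.00839 — 2 statements merged into one kernel-verified Lean document; each statement's English description precedes it below -/
import Mathlib

section
/- Let G be a finite group of order n and f₁, f₂ : G → {0,1} sceneries. If their multispectra agree, i.e., A_{f₁}(x₁,...,x_n) = A_{f₂}(x₁,...,x_n) for all x₁,...,x_n ∈ G, then f₁ is a shift of f₂: there exists g ∈ G such that f₁(k) = f₂(kg) for all k ∈ G. -/
open BigOperators

def extFin {G : Type*} [Group G] {N : ℕ} (z : Fin N → G) : ℕ → G :=
  fun i => if h : i < N then z ⟨i, h⟩ else 1

def cumProd {G : Type*} [Group G] {n : ℕ} (x : Fin n → G) : ℕ → G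
  | 0 => 1
  | (j + 1) => extFin x j * cumProd x j

/-!
Every tuple `(q₁, …, q_n)` of elements of `G` is the sequence of partial products of some
`(x₁, …, x_n)`, so the hypothesis says that the sums `∑ₖ f k ∏ⱼ f (qⱼ k)` agree for all tuples `q`.
For a scenery `f` with support `S` such a sum counts the `k ∈ S` with `qⱼ k ∈ S` for all `j`.
Taking all `qⱼ = 1` shows `|S₁| = |S₂|`. If `s ∈ S₁`, taking for `q` an enumeration of `S₁ s⁻¹`
makes the sum for `f₁` positive, so some `k₀` has `S₁ s⁻¹ k₀ ⊆ S₂`; equal cardinalities force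
`S₁ s⁻¹ k₀ = S₂`.
-/

open Finset

section CumProd

variable {G : Type*} [Group G] {n : ℕ}

theorem cumProd_telescope (d : ℕ → G) (hd : d 0 = 1) :
    ∀ j ≤ n, cumProd (fun i : Fin n => d (i + 1) * (d i)⁻¹) j = d j := by
  intro j
  induction j with
  | zero => intro _; simp [cumProd, hd]
  | succ j ih =>
    intro hj
    have hjn : j < n := hj
    simp only [cumProd, extFin, hjn, dif_pos, ih hjn.le]
    group

theorem exists_cumProd_eq (q : Fin n → G) :
    ∃ x : Fin n → G, ∀ j : Fin n, cumProd x (j + 1) = q j := by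
  let d : ℕ → G := fun i => if i = 0 then 1 else extFin q (i - 1)
  refine ⟨fun i => d (i + 1) * (d i)⁻¹, fun j => ?_⟩
  rw [cumProd_telescope d rfl _ j.isLt]
  simp [d, extFin]

end CumProd

section Multicorrelation

variable {G ι κ R : Type*} [Group G] [Fintype G] [Fintype ι] [Fintype κ]

def multicorrelation [CommSemiring R] (f : G → R) (q : ι → G) : R :=
  ∑ k, f k * ∏ j, f (q j * k)

theorem multicorrelation_comp_equiv [CommSemiring R] (f : G → R) (q : ι → G) (e : κ ≃ ι) :
    multicorrelation f (q ∘ e) = multicorrelation f q := by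
  unfold multicorrelation
  exact sum_congr rfl fun k _ => by rw [Function.comp_def, Equiv.prod_comp e fun j => f (q j * k)]

theorem multicorrelation_ne_zero_iff [CommSemiring R] [PartialOrder R] [IsOrderedRing R]
    [NoZeroDivisors R] [Nontrivial R] {f : G → R} (hf : ∀ k, 0 ≤ f k) (q : ι → G) :
    multicorrelation f q ≠ 0 ↔ ∃ k, f k ≠ 0 ∧ ∀ j, f (q j * k) ≠ 0 := by
  have hterm : ∀ k, 0 ≤ f k * ∏ j, f (q j * k) :=
    fun k => mul_nonneg (hf k) (prod_nonneg fun j _ => hf _)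
  simp [multicorrelation, sum_eq_zero_iff_of_nonneg fun k _ => hterm k, prod_ne_zero_iff]

theorem multicorrelation_const_one [CommSemiring R] {f : G → R} (hf : ∀ k, f k = 0 ∨ f k = 1) :
    multicorrelation f (fun _ : ι => 1) = ∑ k, f k := by
  refine sum_congr rfl fun k _ => ?_
  rcases hf k with hk | hk <;> simp [hk]

end Multicorrelation

section Scenery

variable {G R : Type*} [Group G] [Fintype G]

theorem eq_comp_mul_right_of_le_of_sum_eq [AddCommMonoid R] [PartialOrder R]
    [IsOrderedCancelAddMonoid R] {f₁ f₂ : G → R} {g : G} (hle : ∀ k, f₁ k ≤ f₂ (k * g))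
    (hsum : ∑ k, f₁ k = ∑ k, f₂ k) (k : G) : f₁ k = f₂ (k * g) := by
  rw [← Equiv.sum_comp (Equiv.mulRight g) f₂] at hsum
  exact (sum_eq_sum_iff_of_le fun k _ => hle k).1 hsum k (mem_univ k)

theorem exists_le_comp_mul_right_of_multicorrelation_eq [CommSemiring R] [PartialOrder R]
    [IsOrderedRing R] [NoZeroDivisors R] [Nontrivial R] {f₁ f₂ : G → R}
    (hf₁ : ∀ k, f₁ k = 0 ∨ f₁ k = 1) (hf₂ : ∀ k, f₂ k = 0 ∨ f₂ k = 1)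
    (hA : ∀ q : G → G, multicorrelation f₁ q = multicorrelation f₂ q) :
    ∃ g, ∀ k, f₁ k ≤ f₂ (k * g) := by
  have hnonneg (f : G → R) (hf : ∀ k, f k = 0 ∨ f k = 1) k : 0 ≤ f k := by
    rcases hf k with h | h <;> simp [h]
  have hf₂nonneg := hnonneg f₂ hf₂
  by_cases hzero : ∀ k, f₁ k = 0
  · exact ⟨1, fun k => by simpa [hzero k] using hf₂nonneg k⟩
  push Not at hzero
  obtain ⟨s, hs⟩ := hzero
  classical
  let q : G → G := fun k => if f₁ k = 0 then 1 else k * s⁻¹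
  have hq : ∀ j, f₁ (q j * s) ≠ 0 := fun j => by
    by_cases hj : f₁ j = 0 <;> simp [q, hj, hs]
  obtain ⟨k₀, -, hk₀⟩ := (multicorrelation_ne_zero_iff hf₂nonneg q).1 <| by
    rw [← hA q]
    exact (multicorrelation_ne_zero_iff (hnonneg f₁ hf₁) q).2 ⟨s, hs, hq⟩
  refine ⟨s⁻¹ * k₀, fun k => ?_⟩
  rcases hf₁ k with hk | hk
  · simpa [hk] using hf₂nonneg _
  · have := hk₀ k
    simp only [q, hk, one_ne_zero, if_false] at this
    rw [hk, ← mul_assoc, (hf₂ _).resolve_left this]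

end Scenery

/-- if two sceneries on `G` have the same `|G|`-fold
multispectrum, then one is a (right) shift of the other. -/
theorem multispectrum_determines_scenery {G : Type*} [Group G] [Fintype G]
    (f₁ f₂ : G → ℝ) (hf₁ : ∀ k, f₁ k = 0 ∨ f₁ k = 1) (hf₂ : ∀ k, f₂ k = 0 ∨ f₂ k = 1)
    (hA : ∀ x : Fin (Fintype.card G) → G,
      (∑ k : G, f₁ k * ∏ j : Fin (Fintype.card G), f₁ (cumProd x (j + 1) * k))
        = ∑ k : G, f₂ k * ∏ j : Fin (Fintype.card G), f₂ (cumProd x (j + 1) * k)) :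
    ∃ g : G, ∀ k : G, f₁ k = f₂ (k * g) := by
  have hfin (q : Fin (Fintype.card G) → G) : multicorrelation f₁ q = multicorrelation f₂ q := by
    obtain ⟨x, hx⟩ := exists_cumProd_eq q
    simpa only [multicorrelation, hx] using hA x
  have hcorr (q : G → G) : multicorrelation f₁ q = multicorrelation f₂ q := by
    rw [← multicorrelation_comp_equiv f₁ q (Fintype.equivFin G).symm,
      ← multicorrelation_comp_equiv f₂ q (Fintype.equivFin G).symm]
    exact hfin _
  have hsum : ∑ k, f₁ k = ∑ k, f₂ k := by
    rw [← multicorrelation_const_one (ι := G) hf₁, ← multicorrelation_const_one (ι := G) hf₂]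
    exact hcorr _
  obtain ⟨g, hle⟩ := exists_le_comp_mul_right_of_multicorrelation_eq hf₁ hf₂ hcorr
  exact ⟨g, eq_comp_mul_right_of_le_of_sum_eq hle hsum⟩
end

section
/- Let G be a finite non-abelian group of order n and let γ be any probability distribution on G. Then there exists a function J_n : Gⁿ → ℂ, not identically zero, such that for all positive integers ℓ₁,...,ℓ_n, ∑ d_{ρ₁}···d_{ρ_n} Tr((γ̂(ρ₁)^{ℓ₁} ⊗ ··· ⊗ γ̂(ρ_n)^{ℓ_n}) Ĵ_n(ρ₁ ⊗ ··· ⊗ ρ_n)) = 0, where the sum ranges over all n-tuples of irreducible representations of G up to equivalence. In other words, no random walk on a finite non-abelian group satisfies the multispectral reconstruction condition. -/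
/-!
Take `J(x₁, …, xₙ) = f(x₁) ⋯ f(xₙ)`. The sum then factors as `∏ᵢ ∑ₛ f(s) F_{ℓᵢ}(s)` with
`F_ℓ(s) = ∑_ρ d_ρ Tr(γ̂(ρ)^ℓ ρ(s))`, so it suffices to find `f ≠ 0` orthogonal to every `F_ℓ`.
By Cayley–Hamilton for the block matrix `(γ̂(ρ))_ρ`, all `F_ℓ` lie in a space of dimension at
most `∑ d_ρ`. If some `d_ρ ≥ 2`, Schur orthogonality gives `∑ d_ρ < ∑ d_ρ² ≤ |G|`; if all
`d_ρ = 1`, every `F_ℓ` takes the same value at `ab` and `ba`, where `a` and `b` do not commute.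
Either way the `F_ℓ` span a proper subspace of `G → ℂ`, which is annihilated by some nonzero `f`.
-/

open Matrix BigOperators

noncomputable def matFT {G : Type*} [Group G] [Fintype G] {d : ℕ} (f : G → ℂ)
    (ρ : G →* Matrix (Fin d) (Fin d) ℂ) : Matrix (Fin d) (Fin d) ℂ :=
  ∑ s : G, f s • ρ s

def MatRepIrreducible {G : Type*} [Group G] {d : ℕ}
    (ρ : G →* Matrix (Fin d) (Fin d) ℂ) : Prop :=
  0 < d ∧ ∀ W : Submodule ℂ (Fin d → ℂ),
    (∀ s : G, W.map (Matrix.toLin' (ρ s)) ≤ W) → W = ⊥ ∨ W = ⊤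

def MatRepEquiv {G : Type*} [Group G] {d₁ d₂ : ℕ}
    (ρ₁ : G →* Matrix (Fin d₁) (Fin d₁) ℂ)
    (ρ₂ : G →* Matrix (Fin d₂) (Fin d₂) ℂ) : Prop :=
  ∃ e : (Fin d₁ → ℂ) ≃ₗ[ℂ] (Fin d₂ → ℂ),
    ∀ s : G, (e.toLinearMap ∘ₗ Matrix.toLin' (ρ₁ s)) = (Matrix.toLin' (ρ₂ s) ∘ₗ e.toLinearMap)

/-- The `n`-fold Kronecker product realized on the index type `Π i, Fin (d i)`. -/
def kronPi {κ : Type*} [Fintype κ] {d : κ → ℕ}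
    (M : ∀ i, Matrix (Fin (d i)) (Fin (d i)) ℂ) :
    Matrix (∀ i, Fin (d i)) (∀ i, Fin (d i)) ℂ :=
  fun a b => ∏ i, M i (a i) (b i)

theorem Matrix.mul_comm_of_subsingleton {n R : Type*} [Fintype n] [Subsingleton n] [CommSemiring R]
    (A B : Matrix n n R) : A * B = B * A := by
  ext p q
  simp only [mul_apply]
  refine Finset.sum_congr rfl fun k _ => ?_
  rw [Subsingleton.elim p k, Subsingleton.elim q k, mul_comm]

open Polynomial in
theorem pow_mem_span_pow_of_aeval_eq_zero {K R : Type*} [Field K] [Ring R] [Algebra K R] {a : R}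
    {p : K[X]} (hp : p.Monic) (ha : aeval a p = 0) (ℓ : ℕ) :
    a ^ ℓ ∈ Submodule.span K (Set.range fun k : Fin p.natDegree => a ^ (k : ℕ)) := by
  rw [PowerBasis.mem_span_pow']
  refine ⟨X ^ ℓ %ₘ p, ?_, by rw [aeval_modByMonic_eq_self_of_root ha, aeval_X_pow]⟩
  rw [← degree_eq_natDegree hp.ne_zero]
  exact degree_modByMonic_lt _ hp

theorem Submodule.exists_ne_zero_forall_sum_mul_eq_zero {K α : Type*} [Field K] [Fintype α]
    {W : Submodule K (α → K)} (hW : W ≠ ⊤) : ∃ f : α → K, f ≠ 0 ∧ ∀ w ∈ W, ∑ s, f s * w s = 0 := by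
  classical
  obtain ⟨φ, hφ0, hφW⟩ := exists_dual_map_eq_bot_of_lt_top (lt_top_iff_ne_top.mpr hW) inferInstance
  refine ⟨fun s => φ fun t => if s = t then 1 else 0, fun hf => hφ0 (LinearMap.ext fun w => ?_),
    fun w hw => ?_⟩
  · simp [LinearMap.pi_apply_eq_sum_univ φ w, congrFun hf]
  · have hφw : φ w = 0 := LinearMap.le_ker_iff_map.mpr hφW hw
    simpa [LinearMap.pi_apply_eq_sum_univ φ w, mul_comm] using hφw

open Polynomial in
theorem Matrix.aeval_prod_charpoly_eq_zero {ι R : Type*} [Fintype ι] [CommRing R] {n : ι → Type*}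
    [∀ i, Fintype (n i)] [∀ i, DecidableEq (n i)] (A : ∀ i, Matrix (n i) (n i) R) :
    aeval A (∏ i, (A i).charpoly) = 0 := by
  classical
  funext i
  rw [Pi.zero_apply, ← Pi.evalAlgHom_apply R (fun i => Matrix (n i) (n i) R) i (aeval A _),
    ← aeval_algHom_apply, ← Finset.mul_prod_erase _ _ (Finset.mem_univ i), map_mul]
  simp [aeval_self_charpoly]

theorem pow_mem_span_pow_lt_sum_dim {ι : Type*} [Fintype ι] {dd : ι → ℕ}
    (A : ∀ i, Matrix (Fin (dd i)) (Fin (dd i)) ℂ) (ℓ : ℕ) :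
    A ^ ℓ ∈ Submodule.span ℂ (Set.range fun k : Fin (∑ i, dd i) => A ^ (k : ℕ)) := by
  have hp : (∏ i, (A i).charpoly).Monic :=
    Polynomial.monic_prod_of_monic _ _ fun i _ => charpoly_monic _
  have hdeg : (∏ i, (A i).charpoly).natDegree = ∑ i, dd i := by
    simp [Polynomial.natDegree_prod_of_monic _ _ fun i _ => charpoly_monic (A i)]
  rw [← hdeg]
  exact pow_mem_span_pow_of_aeval_eq_zero hp (aeval_prod_charpoly_eq_zero A) ℓ

section Schur

variable {G : Type*} [Group G] {d₁ d₂ : ℕ}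
  {ρ₁ : G →* Matrix (Fin d₁) (Fin d₁) ℂ} {ρ₂ : G →* Matrix (Fin d₂) (Fin d₂) ℂ}
  {T : Matrix (Fin d₂) (Fin d₁) ℂ}

theorem toLin'_apply_of_intertwines (hT : ∀ s, T * ρ₁ s = ρ₂ s * T) (s : G) (v : Fin d₁ → ℂ) :
    toLin' T (toLin' (ρ₁ s) v) = toLin' (ρ₂ s) (toLin' T v) := by
  rw [← LinearMap.comp_apply, ← toLin'_mul, hT, toLin'_mul, LinearMap.comp_apply]

theorem bijective_toLin'_of_intertwines (h₁ : MatRepIrreducible ρ₁) (h₂ : MatRepIrreducible ρ₂)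
    (hT : ∀ s, T * ρ₁ s = ρ₂ s * T) (hT0 : T ≠ 0) : Function.Bijective (toLin' T) := by
  have hcomm := toLin'_apply_of_intertwines hT
  have hL0 : toLin' T ≠ 0 := fun h => hT0 (toLin'.injective (by rw [h, map_zero]))
  have hker : LinearMap.ker (toLin' T) = ⊥ := by
    refine (h₁.2 _ fun s => ?_).resolve_right fun h => hL0 (LinearMap.ker_eq_top.mp h)
    rintro _ ⟨v, hv, rfl⟩
    exact LinearMap.mem_ker.2 (by rw [hcomm, LinearMap.mem_ker.1 hv, map_zero])
  have hrange : LinearMap.range (toLin' T) = ⊤ := by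
    refine (h₂.2 _ fun s => ?_).resolve_left fun h => hL0 (LinearMap.range_eq_bot.mp h)
    rintro _ ⟨_, ⟨v, rfl⟩, rfl⟩
    exact ⟨_, hcomm s v⟩
  exact ⟨LinearMap.ker_eq_bot.mp hker, LinearMap.range_eq_top.mp hrange⟩

theorem eq_zero_of_intertwines_of_not_matRepEquiv (h₁ : MatRepIrreducible ρ₁)
    (h₂ : MatRepIrreducible ρ₂) (hne : ¬ MatRepEquiv ρ₁ ρ₂) (hT : ∀ s, T * ρ₁ s = ρ₂ s * T) :
    T = 0 := by
  by_contra hT0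
  refine hne ⟨LinearEquiv.ofBijective _ (bijective_toLin'_of_intertwines h₁ h₂ hT hT0), fun s => ?_⟩
  exact LinearMap.ext (toLin'_apply_of_intertwines hT s)

theorem exists_eq_smul_one_of_commute {ρ : G →* Matrix (Fin d₁) (Fin d₁) ℂ}
    (h : MatRepIrreducible ρ) {T : Matrix (Fin d₁) (Fin d₁) ℂ} (hT : ∀ s, T * ρ s = ρ s * T) :
    ∃ μ : ℂ, T = μ • 1 := by
  have : Nonempty (Fin d₁) := Fin.pos_iff_nonempty.mp h.1
  obtain ⟨μ, hμ⟩ := Module.End.exists_eigenvalue (toLin' T)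
  obtain ⟨v, hv⟩ := hμ.exists_hasEigenvector
  refine ⟨μ, sub_eq_zero.mp (not_not.mp fun hne => hv.2 ?_)⟩
  refine (bijective_toLin'_of_intertwines h h (fun s => ?_) hne).injective ?_
  · simp only [sub_mul, mul_sub, hT, smul_mul, mul_smul_comm, one_mul, mul_one]
  · simp [hv.apply_eq_smul]

end Schur

section Orthogonality

variable {G : Type*} [Group G] [Fintype G] {d₁ d₂ : ℕ}
  {ρ₁ : G →* Matrix (Fin d₁) (Fin d₁) ℂ} {ρ₂ : G →* Matrix (Fin d₂) (Fin d₂) ℂ}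

variable (ρ₁ ρ₂) in
noncomputable def intertwinerAvg (M : Matrix (Fin d₂) (Fin d₁) ℂ) : Matrix (Fin d₂) (Fin d₁) ℂ :=
  ∑ s : G, ρ₂ s⁻¹ * M * ρ₁ s

variable (ρ₁ ρ₂) in
theorem intertwinerAvg_mul (M : Matrix (Fin d₂) (Fin d₁) ℂ) (t : G) :
    intertwinerAvg ρ₁ ρ₂ M * ρ₁ t = ρ₂ t * intertwinerAvg ρ₁ ρ₂ M := by
  simp only [intertwinerAvg, Matrix.sum_mul, Matrix.mul_sum]
  refine Fintype.sum_equiv (Equiv.mulRight t) _ _ fun s => ?_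
  simp only [Equiv.coe_mulRight, _root_.mul_inv_rev, map_mul, Matrix.mul_assoc]
  rw [← Matrix.mul_assoc (ρ₂ t), ← map_mul ρ₂ t, mul_inv_cancel, map_one, Matrix.one_mul]

variable (ρ₁ ρ₂) in
theorem intertwinerAvg_single_apply (q p : Fin d₂) (j k : Fin d₁) :
    intertwinerAvg ρ₁ ρ₂ (single q j 1) p k = ∑ s : G, ρ₂ s⁻¹ p q * ρ₁ s j k := by
  simp [intertwinerAvg, Matrix.sum_apply, mul_apply, single_apply, ite_and]

variable (ρ₁) in
theorem trace_intertwinerAvg (M : Matrix (Fin d₁) (Fin d₁) ℂ) :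
    trace (intertwinerAvg ρ₁ ρ₁ M) = Fintype.card G * trace M := by
  simp [intertwinerAvg, trace_sum, trace_mul_cycle (ρ₁ _⁻¹), ← map_mul]

theorem sum_inv_apply_mul_apply_of_not_matRepEquiv (h₁ : MatRepIrreducible ρ₁)
    (h₂ : MatRepIrreducible ρ₂) (hne : ¬ MatRepEquiv ρ₁ ρ₂) (p q : Fin d₂) (j k : Fin d₁) :
    ∑ s : G, ρ₂ s⁻¹ p q * ρ₁ s j k = 0 := by
  rw [← intertwinerAvg_single_apply, eq_zero_of_intertwines_of_not_matRepEquiv h₁ h₂ hne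
    (intertwinerAvg_mul ρ₁ ρ₂ _), Matrix.zero_apply]

theorem sum_inv_apply_mul_apply_self (h₁ : MatRepIrreducible ρ₁) (p q j k : Fin d₁) :
    ∑ s : G, ρ₁ s⁻¹ p q * ρ₁ s j k = if p = k ∧ q = j then (Fintype.card G / d₁ : ℂ) else 0 := by
  obtain ⟨μ, hμ⟩ := exists_eq_smul_one_of_commute h₁ (intertwinerAvg_mul ρ₁ ρ₁ (single q j 1))
  have htrace := trace_intertwinerAvg ρ₁ (single q j 1)
  rw [hμ, trace_smul, trace_one, Fintype.card_fin, smul_eq_mul] at htrace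
  have hd : (d₁ : ℂ) ≠ 0 := Nat.cast_ne_zero.mpr h₁.1.ne'
  rw [← intertwinerAvg_single_apply, hμ, Matrix.smul_apply, one_apply, smul_eq_mul]
  by_cases hqj : q = j
  · rw [hqj, trace_single_eq_same, mul_one] at htrace
    simp [hqj, ← htrace, hd]
  · rw [trace_single_eq_of_ne _ _ _ hqj, mul_zero, mul_eq_zero] at htrace
    simp [hqj, htrace.resolve_right hd]

end Orthogonality

section InvFourier

variable {G : Type*} [Group G] {ι : Type*} [Fintype ι] (dd : ι → ℕ)
  (ρ : ∀ i, G →* Matrix (Fin (dd i)) (Fin (dd i)) ℂ)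

-- The Fourier inversion formula `M ↦ ∑_ρ d_ρ Tr(M_ρ ρ(s))`, without the factor `|G|⁻¹` and with
-- `ρ(s)` in place of `ρ(s⁻¹)`.
noncomputable def invFourier : (∀ i, Matrix (Fin (dd i)) (Fin (dd i)) ℂ) →ₗ[ℂ] G → ℂ where
  toFun M s := ∑ i, (dd i : ℂ) * trace (M i * ρ i s)
  map_add' M N := by
    funext s
    simp [Matrix.add_mul, mul_add, Finset.sum_add_distrib]
  map_smul' c M := by
    funext s
    simp [Finset.mul_sum, mul_left_comm]

theorem invFourier_apply (M : ∀ i, Matrix (Fin (dd i)) (Fin (dd i)) ℂ) (s : G) :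
    invFourier dd ρ M s = ∑ i, (dd i : ℂ) * trace (M i * ρ i s) :=
  rfl

variable {dd ρ}

theorem sum_invFourier_mul_inv_apply [Fintype G] (hirr : ∀ i, MatRepIrreducible (ρ i))
    (hinequiv : ∀ i j, i ≠ j → ¬ MatRepEquiv (ρ i) (ρ j))
    (M : ∀ i, Matrix (Fin (dd i)) (Fin (dd i)) ℂ) (i : ι) (p q : Fin (dd i)) :
    ∑ s, invFourier dd ρ M s * ρ i s⁻¹ p q = Fintype.card G * M i p q := by
  classical
  have hd : (dd i : ℂ) ≠ 0 := Nat.cast_ne_zero.mpr (hirr i).1.ne'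
  calc ∑ s, invFourier dd ρ M s * ρ i s⁻¹ p q
      = ∑ i', (dd i' : ℂ) * ∑ j, ∑ k, M i' j k * ∑ s, ρ i s⁻¹ p q * ρ i' s k j := by
        simp only [invFourier_apply, trace, diag, mul_apply, Finset.sum_mul, Finset.mul_sum]
        rw [Finset.sum_comm]
        refine Finset.sum_congr rfl fun i' _ => ?_
        rw [Finset.sum_comm]
        refine Finset.sum_congr rfl fun j _ => ?_
        rw [Finset.sum_comm]
        refine Finset.sum_congr rfl fun k _ => Finset.sum_congr rfl fun s _ => by ring
    _ = dd i * ∑ j, ∑ k, M i j k * if p = j ∧ q = k then (Fintype.card G / dd i : ℂ) else 0 := by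
        rw [Finset.sum_eq_single i (fun i' _ hi' => by
          simp [sum_inv_apply_mul_apply_of_not_matRepEquiv (hirr i') (hirr i) (hinequiv i' i hi')])
          (by simp)]
        simp only [sum_inv_apply_mul_apply_self (hirr i)]
    _ = Fintype.card G * M i p q := by
        simp only [ite_and, mul_ite, mul_zero, Finset.sum_ite_irrel, Finset.sum_ite_eq,
          Finset.mem_univ, ↓reduceIte, Finset.sum_const_zero]
        field_simp

theorem invFourier_injective [Fintype G] (hirr : ∀ i, MatRepIrreducible (ρ i))
    (hinequiv : ∀ i j, i ≠ j → ¬ MatRepEquiv (ρ i) (ρ j)) :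
    Function.Injective (invFourier dd ρ) := by
  refine (injective_iff_map_eq_zero _).mpr fun M hM => ?_
  ext i p q
  have h := sum_invFourier_mul_inv_apply hirr hinequiv M i p q
  simp only [hM, Pi.zero_apply, zero_mul, Finset.sum_const_zero] at h
  exact (mul_eq_zero.mp h.symm).resolve_left (Nat.cast_ne_zero.mpr Fintype.card_ne_zero)

theorem sum_dim_sq_le_card [Fintype G] (hirr : ∀ i, MatRepIrreducible (ρ i))
    (hinequiv : ∀ i j, i ≠ j → ¬ MatRepEquiv (ρ i) (ρ j)) :
    ∑ i, dd i ^ 2 ≤ Fintype.card G := by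
  have h := LinearMap.finrank_le_finrank_of_injective (invFourier_injective hirr hinequiv)
  simpa [Module.finrank_pi_fintype, Module.finrank_matrix, sq] using h

variable (ρ) in
theorem invFourier_apply_mul_comm (h : ∀ i, dd i = 1) (M : ∀ i, Matrix (Fin (dd i)) (Fin (dd i)) ℂ)
    (a b : G) : invFourier dd ρ M (a * b) = invFourier dd ρ M (b * a) := by
  refine Finset.sum_congr rfl fun i _ => ?_
  have : Subsingleton (Fin (dd i)) := Fin.subsingleton_iff_le_one.mpr (h i).le
  rw [map_mul, map_mul, mul_comm_of_subsingleton (ρ i a)]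

variable (ρ) in
theorem range_invFourier_ne_top (hna : ∃ a b : G, a * b ≠ b * a) (h : ∀ i, dd i = 1) :
    LinearMap.range (invFourier dd ρ) ≠ ⊤ := by
  classical
  obtain ⟨a, b, hab⟩ := hna
  intro htop
  obtain ⟨M, hM⟩ := LinearMap.range_eq_top.mp htop (Pi.single (a * b) 1)
  have hcomm := invFourier_apply_mul_comm ρ h M a b
  simp [hM, hab.symm] at hcomm

theorem sum_dim_lt_card [Fintype G] (hirr : ∀ i, MatRepIrreducible (ρ i))
    (hinequiv : ∀ i j, i ≠ j → ¬ MatRepEquiv (ρ i) (ρ j)) (h : ∃ i, dd i ≠ 1) :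
    ∑ i, dd i < Fintype.card G := by
  obtain ⟨i₀, hi₀⟩ := h
  have h2 : 2 ≤ dd i₀ := by have := (hirr i₀).1; omega
  refine lt_of_lt_of_le (Finset.sum_lt_sum (fun i _ => Nat.le_self_pow two_ne_zero _)
    ⟨i₀, Finset.mem_univ _, ?_⟩) (sum_dim_sq_le_card hirr hinequiv)
  nlinarith

theorem exists_ne_zero_forall_sum_mul_invFourier_pow_eq_zero [Fintype G]
    (hna : ∃ a b : G, a * b ≠ b * a) (hirr : ∀ i, MatRepIrreducible (ρ i))
    (hinequiv : ∀ i j, i ≠ j → ¬ MatRepEquiv (ρ i) (ρ j))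
    (A : ∀ i, Matrix (Fin (dd i)) (Fin (dd i)) ℂ) :
    ∃ f : G → ℂ, f ≠ 0 ∧ ∀ ℓ : ℕ, ∑ s, f s * invFourier dd ρ (A ^ ℓ) s = 0 := by
  set W := Submodule.span ℂ (Set.range fun k : Fin (∑ i, dd i) => invFourier dd ρ (A ^ (k : ℕ)))
  have hmem (ℓ : ℕ) : invFourier dd ρ (A ^ ℓ) ∈ W := by
    have h := Submodule.mem_map_of_mem (f := invFourier dd ρ) (pow_mem_span_pow_lt_sum_dim A ℓ)
    rwa [Submodule.map_span, ← Set.range_comp] at h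
  have hW : W ≠ ⊤ := by
    by_cases h : ∀ i, dd i = 1
    · refine ne_top_of_le_ne_top (range_invFourier_ne_top ρ hna h) ?_
      exact Submodule.span_le.mpr (Set.range_subset_iff.mpr fun k => LinearMap.mem_range_self _ _)
    · intro htop
      have hle : Module.finrank ℂ W ≤ ∑ i, dd i := by
        have h := finrank_range_le_card (R := ℂ) fun k : Fin (∑ i, dd i) =>
          invFourier dd ρ (A ^ (k : ℕ))
        rwa [Fintype.card_fin] at h
      rw [htop, finrank_top, Module.finrank_fintype_fun_eq_card] at hle
      exact (sum_dim_lt_card hirr hinequiv (not_forall.mp h)).not_ge hle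
  obtain ⟨f, hf0, hf⟩ := Submodule.exists_ne_zero_forall_sum_mul_eq_zero hW
  exact ⟨f, hf0, fun ℓ => hf _ (hmem ℓ)⟩

end InvFourier

theorem trace_kronPi_mul {κ : Type*} [Fintype κ] [DecidableEq κ] {d : κ → ℕ}
    (M N : ∀ i, Matrix (Fin (d i)) (Fin (d i)) ℂ) :
    trace (kronPi M * kronPi N) = ∏ i, trace (M i * N i) := by
  simp only [trace, diag, mul_apply, kronPi, Fintype.prod_sum, ← Finset.prod_mul_distrib]

section Factorization

variable {G : Type*} [Group G] [Fintype G] {ι : Type*} [Fintype ι] {dd : ι → ℕ}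
  {ρ : ∀ i, G →* Matrix (Fin (dd i)) (Fin (dd i)) ℂ}

theorem sum_trace_kronPi_mul_sum_prod_smul {κ : Type*} [Fintype κ] [DecidableEq κ]
    (B : κ → ∀ j, Matrix (Fin (dd j)) (Fin (dd j)) ℂ) (f : G → ℂ) :
    ∑ c : κ → ι, (∏ i, (dd (c i) : ℂ)) *
        trace (kronPi (fun i => B i (c i)) *
          ∑ x : κ → G, (∏ i, f (x i)) • kronPi (fun i => ρ (c i) (x i)))
      = ∏ i, ∑ s, f s * invFourier dd ρ (B i) s := by
  calc _ = ∑ c : κ → ι, ∑ x : κ → G,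
        ∏ i, f (x i) * ((dd (c i) : ℂ) * trace (B i (c i) * ρ (c i) (x i))) := by
        refine Finset.sum_congr rfl fun c _ => ?_
        simp only [Matrix.mul_smul, trace_sum, trace_smul, trace_kronPi_mul,
          smul_eq_mul, Finset.mul_sum, Finset.prod_mul_distrib]
        exact Finset.sum_congr rfl fun x _ => by ring
    _ = _ := by
        simp only [invFourier_apply, Finset.mul_sum, Fintype.prod_sum]
        exact Finset.sum_comm

end Factorization

theorem no_reconstructive_condition_nonabelian_general {G : Type*} [Group G] [Fintype G]
    (hna : ∃ a b : G, a * b ≠ b * a)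
    (γ : G → ℝ)
    {ι : Type*} [Fintype ι] (dd : ι → ℕ)
    (ρ : ∀ i : ι, G →* Matrix (Fin (dd i)) (Fin (dd i)) ℂ)
    (hirr : ∀ i, MatRepIrreducible (ρ i))
    (hinequiv : ∀ i j, i ≠ j → ¬ MatRepEquiv (ρ i) (ρ j)) :
    ∃ J : (Fin (Fintype.card G) → G) → ℂ, J ≠ 0 ∧
      ∀ ℓ : Fin (Fintype.card G) → ℕ, (∀ i, 1 ≤ ℓ i) →
        ∑ c : Fin (Fintype.card G) → ι, (∏ i, (dd (c i) : ℂ)) *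
          Matrix.trace
            (kronPi (fun i => (matFT (fun s => (γ s : ℂ)) (ρ (c i))) ^ (ℓ i)) *
              ∑ x : Fin (Fintype.card G) → G, J x • kronPi (fun i => ρ (c i) (x i)))
          = 0 := by
  let A : ∀ i, Matrix (Fin (dd i)) (Fin (dd i)) ℂ := fun i => matFT (fun s => (γ s : ℂ)) (ρ i)
  obtain ⟨f, hf0, hf⟩ := exists_ne_zero_forall_sum_mul_invFourier_pow_eq_zero hna hirr hinequiv A
  obtain ⟨s₀, hs₀⟩ := Function.ne_iff.mp hf0
  refine ⟨fun x => ∏ i, f (x i), fun hJ => ?_, fun ℓ _ => ?_⟩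
  · exact hs₀ (by simpa using congrFun hJ fun _ => s₀)
  · exact (sum_trace_kronPi_mul_sum_prod_smul (fun i => A ^ ℓ i) f).trans
      (Finset.prod_eq_zero (Finset.mem_univ ⟨0, Fintype.card_pos⟩) (hf _))

/-- Theorem 2 of the paper: if `G` is a finite non-abelian group
of order `n`, then for any probability distribution `γ` on `G` there is a
function `Jₙ : Gⁿ → ℂ`, not identically zero, with
`∑ d_{ρ₁}⋯d_{ρₙ} Tr((γ̂(ρ₁)^{ℓ₁} ⊗ ⋯ ⊗ γ̂(ρₙ)^{ℓₙ}) Ĵₙ(ρ₁ ⊗ ⋯ ⊗ ρₙ)) = 0`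
for all positive integers `ℓ₁,…,ℓₙ`, the sum being over all `n`-tuples of
irreducible representations of `G` up to equivalence. -/
theorem no_reconstructive_condition_nonabelian {G : Type*} [Group G] [Fintype G]
    (hna : ∃ a b : G, a * b ≠ b * a)
    (γ : G → ℝ) (hγ : ∀ s, 0 ≤ γ s) (hγsum : ∑ s : G, γ s = 1)
    {ι : Type*} [Fintype ι] (dd : ι → ℕ)
    (ρ : ∀ i : ι, G →* Matrix (Fin (dd i)) (Fin (dd i)) ℂ)
    (hirr : ∀ i, MatRepIrreducible (ρ i))
    (hinequiv : ∀ i j, i ≠ j → ¬ MatRepEquiv (ρ i) (ρ j))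
    (hcomplete : ∀ (m : ℕ) (σ : G →* Matrix (Fin m) (Fin m) ℂ),
      MatRepIrreducible σ → ∃ i, MatRepEquiv σ (ρ i)) :
    ∃ J : (Fin (Fintype.card G) → G) → ℂ, J ≠ 0 ∧
      ∀ ℓ : Fin (Fintype.card G) → ℕ, (∀ i, 1 ≤ ℓ i) →
        ∑ c : Fin (Fintype.card G) → ι, (∏ i, (dd (c i) : ℂ)) *
          Matrix.trace
            (kronPi (fun i => (matFT (fun s => (γ s : ℂ)) (ρ (c i))) ^ (ℓ i)) *
              ∑ x : Fin (Fintype.card G) → G, J x • kronPi (fun i => ρ (c i) (x i)))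
          = 0 :=
  no_reconstructive_condition_nonabelian_general hna γ dd ρ hirr hinequiv
end
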